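/- Let λ > 0 and let ν_λ be the uniform distribution on the interval [−λ, λ] ⊆ ℝ. For any measurable h : ℝ → ℝ with 0 ≤ h ≤ 1, define ĥ(x) = ∫ h(x + ε) dν_λ(ε). Then for all x, y ∈ ℝ one has |ĥ(x) − ĥ(y)| ≤ |x − y| / (2λ). -/
import Mathlib


open MeasureTheory

/-- The uniform distribution on `[-λ, λ] ⊆ ℝ`. -/
noncomputable def unifInterval (l : ℝ) : Measure ℝ :=
  (ENNReal.ofReal (2 * l))⁻¹ • volume.restrict (Set.Icc (-l) l)

theorem stmt_3 {l : ℝ} (hl : 0 < l)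
    (h : ℝ → ℝ) (hmeas : Measurable h)
    (h0 : ∀ ψ, 0 ≤ h ψ) (h1 : ∀ ψ, h ψ ≤ 1)
    (x y : ℝ) :
    |(∫ ε, h (x + ε) ∂(unifInterval l)) - ∫ ε, h (y + ε) ∂(unifInterval l)| ≤
      |x - y| / (2 * l) := by
  have h2l : (0:ℝ) < 2 * l := by linarith
  -- interval integrability of h on any interval
  have hint : ∀ a b : ℝ, IntervalIntegrable h volume a b := by
    intro a b
    constructor <;>
    · refine Integrable.mono' (integrable_const 1) hmeas.aestronglyMeasurable.restrict ?_
      filter_upwards with t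
      rw [Real.norm_eq_abs, abs_of_nonneg (h0 t)]; exact h1 t
  -- bounds for interval integrals
  have hbd : ∀ u v : ℝ, u ≤ v → (0 ≤ ∫ t in u..v, h t) ∧ (∫ t in u..v, h t) ≤ v - u := by
    intro u v huv
    constructor
    · exact intervalIntegral.integral_nonneg huv fun t _ => h0 t
    · calc (∫ t in u..v, h t) ≤ ∫ _ in u..v, (1:ℝ) :=
            intervalIntegral.integral_mono_on huv (hint u v) intervalIntegrable_const
              fun t _ => h1 t
        _ = v - u := by simp
  -- rewrite the smoothed integrals
  have key : ∀ z : ℝ, (∫ ε, h (z + ε) ∂(unifInterval l)) =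
      (2 * l)⁻¹ * ∫ t in (z - l)..(z + l), h t := by
    intro z
    rw [unifInterval, integral_smul_measure]
    have h1' : ((ENNReal.ofReal (2 * l))⁻¹).toReal = (2 * l)⁻¹ := by
      rw [ENNReal.toReal_inv, ENNReal.toReal_ofReal h2l.le]
    rw [h1']
    congr 1
    rw [MeasureTheory.integral_Icc_eq_integral_Ioc,
      ← intervalIntegral.integral_of_le (by linarith : -l ≤ l),
      intervalIntegral.integral_comp_add_left (fun t => h t) z]
    ring_nf
  rw [key x, key y, ← mul_sub, abs_mul, abs_of_pos (inv_pos.mpr h2l),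
    div_eq_inv_mul]
  refine mul_le_mul_of_nonneg_left ?_ (inv_pos.mpr h2l).le
  -- main estimate, wlog x ≤ y
  wlog hxy : x ≤ y with H
  · rw [abs_sub_comm, abs_sub_comm x y]
    exact H hl h hmeas h0 h1 y x h2l hint hbd key (le_of_not_ge hxy)
  have e1 : (∫ t in (x - l)..(x + l), h t) =
      (∫ t in (x - l)..(y - l), h t) + ∫ t in (y - l)..(x + l), h t :=
    (intervalIntegral.integral_add_adjacent_intervals (hint _ _) (hint _ _)).symm
  have e2 : (∫ t in (y - l)..(y + l), h t) =
      (∫ t in (y - l)..(x + l), h t) + ∫ t in (x + l)..(y + l), h t :=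
    (intervalIntegral.integral_add_adjacent_intervals (hint _ _) (hint _ _)).symm
  have b1 := hbd (x - l) (y - l) (by linarith)
  have b2 := hbd (x + l) (y + l) (by linarith)
  rw [e1, e2, abs_sub_comm, abs_le]
  constructor
  · rw [abs_of_nonpos (by linarith : x - y ≤ 0)]
    nlinarith [b1.1, b1.2, b2.1, b2.2]
  · rw [abs_of_nonpos (by linarith : x - y ≤ 0)]
    nlinarith [b1.1, b1.2, b2.1, b2.2]
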